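/- arXiv:2304.07859 — 5 statements merged into one kernel-verified Lean document; each statement's English description precedes it below -/
import Mathlib

section
/- For a convex body K in R^n, m ∈ N, r > 0, and a direction θ̄ = (θ_1,...,θ_m) ∈ S^{nm-1}, the intersection K ∩ (K + rθ_1) ∩ ... ∩ (K + rθ_m) equals the Wulff shape (Alexandrov body) of the function u ↦ h_K(u) - r·max_{1≤i≤m} ⟨u, θ_i⟩_-, where ⟨u,θ⟩_- denotes the negative part of the inner product. -/
open MeasureTheory Set Pointwise Metric
open scoped RealInnerProductSpace ENNReal NNReal

noncomputable section

/-- `R^n` as Euclidean space. -/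
abbrev En (n : ℕ) : Type := EuclideanSpace ℝ (Fin n)

/-- `(R^n)^m = R^{nm}` with its Euclidean structure. -/
abbrev Enm (n m : ℕ) : Type := PiLp 2 (fun _ : Fin m => En n)

instance (n m : ℕ) : MeasurableSpace (Enm n m) := MeasurableSpace.comap WithLp.ofLp MeasurableSpace.pi
instance (n m : ℕ) : BorelSpace (Enm n m) := PiLp.borelSpace 2

/-- The negative part `t_- = max{0, -t}`. -/
def negpt (t : ℝ) : ℝ := max 0 (-t)

/-- The `m`-th higher-order difference body
`D^m(K) = {(x_1,…,x_m) : K ∩ ⋂ᵢ (xᵢ + K) ≠ ∅}`. -/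
def higherDiff {n m : ℕ} (K : Set (En n)) : Set (Enm n m) :=
  {x | (K ∩ ⋂ i, (x i +ᵥ K)).Nonempty}

/-- The `m`-covariogram `g_{K,m}(x̄) = Vol_n(K ∩ ⋂ᵢ (xᵢ + K))`. -/
def covariogram {n m : ℕ} (K : Set (En n)) (x : Enm n m) : ℝ :=
  (volume (K ∩ ⋂ i, (x i +ᵥ K))).toReal

/-- `C_θ̄ = conv([0,θ_1] ∪ ⋯ ∪ [0,θ_m])`. -/
def Cbody {n m : ℕ} (θ : Enm n m) : Set (En n) :=
  convexHull ℝ (insert 0 (Set.range fun i => θ i))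

/-- Support function `h_K(u) = sup_{y ∈ K} ⟨u, y⟩`. -/
def suppFn {n : ℕ} (K : Set (En n)) (u : En n) : ℝ :=
  sSup ((fun y => ⟪u, y⟫) '' K)

/-- `n·V(K[n-1], L)`, the first variation of volume:
`nV(K[n-1],L) = d/dε Vol_n(K + εL)|_{ε=0⁺}`. -/
def nMixed {n : ℕ} (K L : Set (En n)) : ℝ :=
  derivWithin (fun ε : ℝ => (volume (K + ε • L)).toReal) (Set.Ici 0) 0

/-- Support function of the higher-order projection body:
`h_{Π^m K}(θ̄) = n V(K[n-1], C_{-θ̄})`. -/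
def projSupport {n : ℕ} (m : ℕ) (K : Set (En n)) (θ : Enm n m) : ℝ :=
  nMixed K (Cbody (-θ))

/-- The `m`-th higher-order projection body `Π^m K`. -/
def projBody {n : ℕ} (m : ℕ) (K : Set (En n)) : Set (Enm n m) :=
  {x | ∀ θ : Enm n m, ⟪x, θ⟫ ≤ projSupport m K θ}

/-- The polar of the higher-order projection body, `Π^{∘,m} K = {h_{Π^m K} ≤ 1}`. -/
def polarProjBody {n : ℕ} (m : ℕ) (K : Set (En n)) : Set (Enm n m) :=
  {x | projSupport m K x ≤ 1}

/-- Support function of the higher-order centroid body. -/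
def centroidSupport {n m : ℕ} (L : Set (Enm n m)) (θ : En n) : ℝ :=
  (volume L).toReal⁻¹ * ∫ x in L, (⨆ i, negpt ⟪(x : Enm n m) i, θ⟫)

/-- The `m`-th higher-order centroid body `Γ^m L`. -/
def centroidBody {n m : ℕ} (L : Set (Enm n m)) : Set (En n) :=
  {y | ∀ θ : En n, ⟪y, θ⟫ ≤ centroidSupport L θ}

/-- Radial function of a star-shaped set. -/
def radialFn {V : Type*} [SMul ℝ V] (A : Set V) (y : V) : ℝ :=
  sSup {r : ℝ | 0 < r ∧ r • y ∈ A}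

/-- `K` is an `n`-dimensional simplex. -/
def IsSimplexBody {n : ℕ} (K : Set (En n)) : Prop :=
  ∃ v : Fin (n + 1) → En n, AffineIndependent ℝ v ∧ K = convexHull ℝ (Set.range v)

/-- The Wulff shape (Alexandrov body) of a function on the unit sphere. -/
def wulff {n : ℕ} (f : En n → ℝ) : Set (En n) :=
  ⋂ u ∈ sphere (0 : En n) 1, {x : En n | ⟪x, u⟫ ≤ f u}

/-!
A compact convex body is the intersection of the half-spaces `⟪·, u⟫ ≤ h_K(u)`, `‖u‖ = 1`, so
`x ∈ K + rθᵢ` iff `⟪x, u⟫ - r⟪θᵢ, u⟫ ≤ h_K(u)` for every unit `u`. Since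
`h_K(u) - r·max_i ⟨u, θ_i⟩_-` is the minimum of `h_K(u)` and of the numbers `h_K(u) + r⟪u, θᵢ⟫`,
the Wulff shape of this function is cut out by exactly these inequalities.
-/

section SupportFunction

variable {n : ℕ} {K : Set (En n)}

theorem inner_le_suppFn (hK : IsCompact K) {y : En n} (hy : y ∈ K) (u : En n) :
    ⟪u, y⟫ ≤ suppFn K u :=
  le_csSup (hK.image (continuous_const.inner continuous_id)).bddAbove ⟨y, hy, rfl⟩

theorem suppFn_le (hne : K.Nonempty) {u : En n} {c : ℝ} (h : ∀ y ∈ K, ⟪u, y⟫ ≤ c) :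
    suppFn K u ≤ c :=
  csSup_le (hne.image _) (forall_mem_image.2 h)

theorem exists_norm_eq_one_suppFn_lt_inner (hKc : Convex ℝ K) (hKcl : IsClosed K)
    (hne : K.Nonempty) {x : En n} (hx : x ∉ K) :
    ∃ u : En n, ‖u‖ = 1 ∧ suppFn K u < ⟪x, u⟫ := by
  obtain ⟨f, s, hfK, hfx⟩ := geometric_hahn_banach_closed_point hKc hKcl hx
  set v := (InnerProductSpace.toDual ℝ (En n)).symm f
  have hv : ∀ y, ⟪v, y⟫ = f y := fun y => InnerProductSpace.toDual_symm_apply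
  have hv0 : v ≠ 0 := by
    rintro h0
    obtain ⟨y, hy⟩ := hne
    have := (hfK y hy).trans hfx
    simp [← hv, h0] at this
  have hnv : 0 < ‖v‖⁻¹ := inv_pos.2 (norm_pos_iff.2 hv0)
  refine ⟨‖v‖⁻¹ • v, by simp [norm_smul, hv0], ?_⟩
  calc suppFn K (‖v‖⁻¹ • v)
      ≤ ‖v‖⁻¹ * s := suppFn_le hne fun y hy => by
        rw [real_inner_smul_left, hv]
        exact mul_le_mul_of_nonneg_left (hfK y hy).le hnv.le
    _ < ‖v‖⁻¹ * f x := mul_lt_mul_of_pos_left hfx hnv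
    _ = ⟪x, ‖v‖⁻¹ • v⟫ := by rw [real_inner_smul_right, real_inner_comm, hv]

theorem mem_iff_forall_inner_le_suppFn (hK : IsCompact K) (hKc : Convex ℝ K)
    (hne : K.Nonempty) {x : En n} :
    x ∈ K ↔ ∀ u : En n, ‖u‖ = 1 → ⟪x, u⟫ ≤ suppFn K u := by
  refine ⟨fun hx u _ => real_inner_comm x u ▸ inner_le_suppFn hK hx u, fun h => ?_⟩
  by_contra hx
  obtain ⟨u, hu, hlt⟩ := exists_norm_eq_one_suppFn_lt_inner hKc hK.isClosed hne hx
  exact (h u hu).not_gt hlt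

end SupportFunction

section NegativePart

variable {ι : Type*} [Finite ι] {t : ι → ℝ}

theorem iSup_negpt_le_iff {c : ℝ} : ⨆ i, negpt (t i) ≤ c ↔ 0 ≤ c ∧ ∀ i, -t i ≤ c := by
  have hbdd : BddAbove (range fun i => negpt (t i)) := (finite_range _).bddAbove
  refine ⟨fun h => ⟨?_, fun i => ?_⟩, fun ⟨hc, ht⟩ => ?_⟩
  · exact (Real.iSup_nonneg fun i => le_max_left _ _).trans h
  · exact (le_max_right _ _).trans ((le_ciSup hbdd i).trans h)
  · exact Real.iSup_le (fun i => max_le hc (ht i)) hc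

theorem le_sub_mul_iSup_negpt_iff {a h r : ℝ} (hr : 0 < r) :
    a ≤ h - r * ⨆ i, negpt (t i) ↔ a ≤ h ∧ ∀ i, a - r * t i ≤ h := by
  rw [le_sub_comm, ← le_div_iff₀' hr, iSup_negpt_le_iff]
  simp only [le_div_iff₀' hr, mul_zero, mul_neg, sub_nonneg]
  exact and_congr_right fun _ => forall_congr' fun i => by constructor <;> intro <;> linarith

end NegativePart

theorem inter_eq_wulff_general (n m : ℕ)
    (K : Set (En n)) (hK₁ : IsCompact K) (hK₂ : Convex ℝ K)
    (hK₃ : (interior K).Nonempty)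
    (r : ℝ) (hr : 0 < r) (θ : Enm n m) :
    K ∩ ⋂ i, ((r • θ i) +ᵥ K)
      = wulff (fun u => suppFn K u - r * ⨆ i, negpt ⟪u, θ i⟫) := by
  have hmem (y : En n) :=
    mem_iff_forall_inner_le_suppFn hK₁ hK₂ (hK₃.mono interior_subset) (x := y)
  ext x
  simp only [wulff, mem_inter_iff, mem_iInter, mem_vadd_set_iff_neg_vadd_mem, vadd_eq_add,
    neg_add_eq_sub, hmem, mem_sphere_zero_iff_norm, mem_ofPred_eq, le_sub_mul_iSup_negpt_iff hr,
    inner_sub_left, real_inner_smul_left, real_inner_comm (θ _)]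
  exact ⟨fun ⟨hK, hshift⟩ u hu => ⟨hK u hu, fun i => hshift i u hu⟩,
    fun h => ⟨fun u hu => (h u hu).1, fun i u hu => (h u hu).2 i⟩⟩

/-- `K ∩ (K + rθ_1) ∩ ⋯ ∩ (K + rθ_m)` is the Wulff shape of
`u ↦ h_K(u) - r·max_i ⟨u, θ_i⟩_-`. -/
theorem inter_eq_wulff (n m : ℕ) (hn : 0 < n) (hm : 0 < m)
    (K : Set (En n)) (hK₁ : IsCompact K) (hK₂ : Convex ℝ K)
    (hK₃ : (interior K).Nonempty)
    (r : ℝ) (hr : 0 < r) (θ : Enm n m) (hθ : ‖θ‖ = 1) :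
    K ∩ ⋂ i, ((r • θ i) +ᵥ K)
      = wulff (fun u => suppFn K u - r * ⨆ i, negpt ⟪u, θ i⟫) :=
  inter_eq_wulff_general n m K hK₁ hK₂ hK₃ r hr θ
end
end

section
/- For a convex body K in R^n, m ∈ N, and T ∈ GL_n(R), the higher-order projection body satisfies Π^m(TK) = |det T| · T̄^{-t}(Π^m K), where T̄ acts on (R^n)^m coordinatewise by T and T̄^{-t} denotes the inverse transpose applied coordinatewise. -/
open MeasureTheory Set Pointwise Metric
open scoped RealInnerProductSpace ENNReal NNReal

noncomputable section

/-!
Under `T` the volume of `K + ε C` is multiplied by `|det T|`, and `T` maps `C_θ̄` onto `C_{T̄θ̄}`;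
hence `h_{Π^m(TK)}(θ̄) = |det T| h_{Π^m K}(T̄⁻¹θ̄)`. Since `Π^m K` is the set cut out by its support
function and `T̄⁻ᵗ` is the transpose of `T̄⁻¹`, this identity of support functions transfers to the
bodies.
-/

section Wulff

variable {E : Type*} [NormedAddCommGroup E] [InnerProductSpace ℝ E]

/-- `projBody m K` is, by definition, `wulffShape (projSupport m K)`. -/
def wulffShape (h : E → ℝ) : Set E :=
  {x | ∀ θ, ⟪x, θ⟫ ≤ h θ}

theorem wulffShape_mul_comp {h : E → ℝ} {c : ℝ} (hc : 0 < c) {A B : E → E}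
    (hA : Function.Surjective A) (hB : Function.Surjective B)
    (hAB : ∀ y θ, ⟪A y, θ⟫ = ⟪y, B θ⟫) :
    wulffShape (fun θ => c * h (B θ)) = c • A '' wulffShape h := by
  ext x
  constructor
  · intro hx
    obtain ⟨y, hy⟩ := hA (c⁻¹ • x)
    refine ⟨A y, ⟨y, fun φ => ?_, rfl⟩, by simp only [hy, smul_inv_smul₀ hc.ne']⟩
    obtain ⟨θ, rfl⟩ := hB φ
    rw [← hAB, hy, real_inner_smul_left, inv_mul_le_iff₀ hc]
    exact hx θ
  · rintro ⟨_, ⟨y, hy, rfl⟩, rfl⟩ θ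
    rw [real_inner_smul_left, hAB]
    exact mul_le_mul_of_nonneg_left (hy _) hc.le

end Wulff

section Coordinatewise

variable {ι E : Type*}

/-- The paper's `T̄`. -/
def coordwise (f : E → E) (x : PiLp 2 fun _ : ι => E) : PiLp 2 fun _ : ι => E :=
  WithLp.toLp 2 fun i => f (x i)

@[simp]
theorem coordwise_apply (f : E → E) (x : PiLp 2 fun _ : ι => E) (i : ι) :
    coordwise f x i = f (x i) :=
  rfl

theorem coordwise_surjective {f : E → E} (hf : Function.Surjective f) :
    Function.Surjective (coordwise f : (PiLp 2 fun _ : ι => E) → _) := by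
  intro x
  choose g hg using hf
  exact ⟨WithLp.toLp 2 fun i => g (x i), PiLp.ext fun i => hg (x i)⟩

variable [Fintype ι] [NormedAddCommGroup E] [InnerProductSpace ℝ E]

theorem inner_coordwise_left {f g : E → E} (hfg : ∀ y z, ⟪f y, z⟫ = ⟪y, g z⟫)
    (x θ : PiLp 2 fun _ : ι => E) :
    ⟪coordwise f x, θ⟫ = ⟪x, coordwise g θ⟫ := by
  simp only [PiLp.inner_apply, coordwise_apply, hfg]

end Coordinatewise

theorem Cbody_coordwise {n m : ℕ} (T : En n →ₗ[ℝ] En n) (θ : Enm n m) :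
    Cbody (coordwise T θ) = T '' Cbody θ := by
  rw [Cbody, Cbody, T.image_convexHull, Set.image_insert_eq, map_zero, ← Set.range_comp]
  rfl

theorem nMixed_image_linearEquiv {n : ℕ} (T : En n ≃ₗ[ℝ] En n) (K L : Set (En n)) :
    nMixed (T '' K) (T '' L) = |LinearMap.det (T : En n →ₗ[ℝ] En n)| * nMixed K L := by
  have hvol : ∀ ε : ℝ, (volume (T '' K + ε • T '' L)).toReal
      = |LinearMap.det (T : En n →ₗ[ℝ] En n)| * (volume (K + ε • L)).toReal := by
    intro ε
    rw [← image_smul_set, ← Set.image_add, ← LinearEquiv.coe_coe T,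
      Measure.addHaar_image_linearMap, ENNReal.toReal_mul, ENNReal.toReal_ofReal (abs_nonneg _)]
  simp only [nMixed, hvol, derivWithin_const_mul_field]

theorem projSupport_image_linearEquiv {n : ℕ} (m : ℕ) (K : Set (En n)) (T : En n ≃ₗ[ℝ] En n)
    (θ : Enm n m) :
    projSupport m (T '' K) θ
      = |LinearMap.det (T : En n →ₗ[ℝ] En n)| * projSupport m K (coordwise T.symm θ) := by
  have hθ : -θ = coordwise (T : En n →ₗ[ℝ] En n) (-coordwise T.symm θ) :=
    PiLp.ext fun i => by simp
  rw [projSupport, projSupport, hθ, Cbody_coordwise, LinearEquiv.coe_coe,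
    nMixed_image_linearEquiv]

theorem projBody_image_linearEquiv_general (n m : ℕ)
    (K : Set (En n)) (T : En n ≃ₗ[ℝ] En n) :
    projBody m (⇑T '' K)
      = |LinearMap.det (T : En n →ₗ[ℝ] En n)| •
          ((fun x : Enm n m =>
            (WithLp.toLp 2 fun i => LinearMap.adjoint (T.symm : En n →ₗ[ℝ] En n) (x i) : Enm n m))
            '' projBody m K) := by
  have hadj : LinearMap.adjoint (T.symm : En n →ₗ[ℝ] En n) ∘ₗ
      LinearMap.adjoint (T : En n →ₗ[ℝ] En n) = LinearMap.id := by
    rw [← LinearMap.adjoint_comp, ← LinearEquiv.coe_trans, LinearEquiv.symm_trans_self]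
    exact LinearMap.adjoint_id
  have hsurj : Function.Surjective (LinearMap.adjoint (T.symm : En n →ₗ[ℝ] En n)) :=
    Function.RightInverse.surjective fun v => LinearMap.congr_fun hadj v
  have hsupp : projSupport m (T '' K)
      = fun θ => |LinearMap.det (T : En n →ₗ[ℝ] En n)| * projSupport m K (coordwise T.symm θ) :=
    funext (projSupport_image_linearEquiv m K T)
  exact (congrArg wulffShape hsupp).trans <| wulffShape_mul_comp
    (abs_pos.mpr T.isUnit_det'.ne_zero) (coordwise_surjective hsurj)
    (coordwise_surjective T.symm.surjective)
    (inner_coordwise_left fun y z => LinearMap.adjoint_inner_left _ z y)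

/-- `Π^m(TK) = |det T| · T̄^{-t}(Π^m K)` for `T ∈ GL_n(ℝ)`,
where `T̄^{-t}` acts coordinatewise by the inverse transpose (adjoint of the inverse). -/
theorem projBody_image_linearEquiv (n m : ℕ) (hn : 0 < n) (hm : 0 < m)
    (K : Set (En n)) (hK₁ : IsCompact K) (hK₂ : Convex ℝ K)
    (hK₃ : (interior K).Nonempty) (T : En n ≃ₗ[ℝ] En n) :
    projBody m (⇑T '' K)
      = |LinearMap.det (T : En n →ₗ[ℝ] En n)| •
          ((fun x : Enm n m =>
            (WithLp.toLp 2 fun i => LinearMap.adjoint (T.symm : En n →ₗ[ℝ] En n) (x i) : Enm n m))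
            '' projBody m K) :=
  projBody_image_linearEquiv_general n m K T
end
end

section
/- For T ∈ GL_n(R), m ∈ N, and a compact set L ⊂ R^{nm} with positive volume, the higher-order centroid body satisfies Γ^m(T̄ L) = T(Γ^m L), where T̄ acts on R^{nm} coordinatewise by T. -/
/-!
Substituting `x̄ = T̄ ȳ` in the integral defining `h_{Γ^m(T̄L)}(θ)`, the Jacobian `|det T̄|` cancels
against `Vol(T̄L) = |det T̄| Vol(L)`, and `⟨T y_i, θ⟩ = ⟨y_i, T^*θ⟩`; hence
`h_{Γ^m(T̄L)} = h_{Γ^m L} ∘ T^*`. A set cut out by `⟨y, θ⟩ ≤ h(T^*θ)` for all `θ` is the image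
under `T` of the set cut out by `⟨z, φ⟩ ≤ h(φ)`, since `T^*` is a bijection.
-/

open MeasureTheory Set Pointwise Metric
open scoped RealInnerProductSpace ENNReal NNReal

noncomputable section

section piLpCongrRight

variable {𝕜 ι : Type*} [Semiring 𝕜] (p : ℝ≥0∞) {α β : ι → Type*} [∀ i, AddCommGroup (α i)]
  [∀ i, Module 𝕜 (α i)] [∀ i, AddCommGroup (β i)] [∀ i, Module 𝕜 (β i)]

def LinearEquiv.piLpCongrRight (e : ∀ i, α i ≃ₗ[𝕜] β i) : PiLp p α ≃ₗ[𝕜] PiLp p β :=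
  (WithLp.linearEquiv p 𝕜 _).trans
    ((LinearEquiv.piCongrRight e).trans (WithLp.linearEquiv p 𝕜 _).symm)

theorem LinearEquiv.piLpCongrRight_apply (e : ∀ i, α i ≃ₗ[𝕜] β i) (x : PiLp p α) :
    LinearEquiv.piLpCongrRight p e x = WithLp.toLp p (fun i => e i (x i)) :=
  rfl

end piLpCongrRight

theorem setAverage_image_linearEquiv {E F : Type*} [NormedAddCommGroup E] [NormedSpace ℝ E]
    [MeasurableSpace E] [BorelSpace E] [FiniteDimensional ℝ E] (μ : Measure E)
    [μ.IsAddHaarMeasure] [NormedAddCommGroup F] [NormedSpace ℝ F] (A : E ≃ₗ[ℝ] E) {s : Set E}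
    (hs : MeasurableSet s) (f : E → F) :
    ⨍ x in A '' s, f x ∂μ = ⨍ x in s, f (A x) ∂μ := by
  set d := |LinearMap.det (A : E →ₗ[ℝ] E)|
  have hd : d ≠ 0 := abs_ne_zero.2 (A.coe_det ▸ (LinearEquiv.det A).ne_zero)
  have hvol : μ.real (A '' s) = d * μ.real s := by
    rw [measureReal_def, measureReal_def, ← LinearEquiv.coe_coe, Measure.addHaar_image_linearMap,
      ENNReal.toReal_mul, ENNReal.toReal_ofReal (abs_nonneg _)]
  have hint : ∫ x in A '' s, f x ∂μ = ∫ x in s, d • f (A x) ∂μ :=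
    integral_image_eq_integral_abs_det_fderiv_smul μ hs
      (fun x _ => A.toContinuousLinearEquiv.hasFDerivAt.hasFDerivWithinAt) A.injective.injOn f
  rw [setAverage_eq, setAverage_eq, hvol, hint, integral_smul, smul_smul, mul_inv_rev,
    mul_assoc, inv_mul_cancel₀ hd, mul_one]

theorem image_setOf_forall_inner_le {E : Type*} [NormedAddCommGroup E] [InnerProductSpace ℝ E]
    [FiniteDimensional ℝ E] (T : E ≃ₗ[ℝ] E) (h : E → ℝ) :
    T '' {z | ∀ φ, ⟪z, φ⟫ ≤ h φ}
      = {y | ∀ θ, ⟪y, θ⟫ ≤ h (LinearMap.adjoint (T : E →ₗ[ℝ] E) θ)} := by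
  have hsurj : Function.Surjective (LinearMap.adjoint (T : E →ₗ[ℝ] E)) := fun φ =>
    ⟨LinearMap.adjoint (T.symm : E →ₗ[ℝ] E) φ, by
      rw [← LinearMap.comp_apply, ← LinearMap.adjoint_comp, T.symm_comp, LinearMap.adjoint_id,
        LinearMap.id_apply]⟩
  ext y
  rw [T.image_eq_preimage_symm, mem_preimage, mem_ofPred_eq, mem_ofPred_eq, hsurj.forall]
  simp only [LinearMap.adjoint_inner_right, LinearEquiv.coe_coe, LinearEquiv.apply_symm_apply]

theorem centroidSupport_eq_setAverage {n m : ℕ} (L : Set (Enm n m)) (θ : En n) :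
    centroidSupport L θ = ⨍ x in L, ⨆ i, negpt ⟪(x : Enm n m) i, θ⟫ := by
  rw [setAverage_eq, smul_eq_mul, measureReal_def]
  rfl

theorem centroidSupport_image_piLpCongrRight {n m : ℕ} {L : Set (Enm n m)}
    (hL : MeasurableSet L) (T : En n ≃ₗ[ℝ] En n) (θ : En n) :
    centroidSupport (LinearEquiv.piLpCongrRight 2 (fun _ => T) '' L) θ
      = centroidSupport L (LinearMap.adjoint (T : En n →ₗ[ℝ] En n) θ) := by
  simp only [centroidSupport_eq_setAverage, setAverage_image_linearEquiv volume _ hL,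
    LinearEquiv.piLpCongrRight_apply, LinearMap.adjoint_inner_right, LinearEquiv.coe_coe]

theorem centroidBody_image_linearEquiv_general (n m : ℕ)
    (L : Set (Enm n m)) (hL : IsCompact L)
    (T : En n ≃ₗ[ℝ] En n) :
    centroidBody ((fun x : Enm n m => (WithLp.toLp 2 (fun i => T (x i)) : Enm n m)) '' L)
      = ⇑T '' centroidBody L := by
  change centroidBody (LinearEquiv.piLpCongrRight 2 (fun _ => T) '' L) = _
  rw [centroidBody, centroidBody, image_setOf_forall_inner_le]
  simp only [centroidSupport_image_piLpCongrRight hL.measurableSet]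

/-- `Γ^m(T̄L) = T(Γ^m L)` for `T ∈ GL_n(ℝ)`. -/
theorem centroidBody_image_linearEquiv (n m : ℕ) (hn : 0 < n) (hm : 0 < m)
    (L : Set (Enm n m)) (hL : IsCompact L) (hLvol : 0 < volume L)
    (T : En n ≃ₗ[ℝ] En n) :
    centroidBody ((fun x : Enm n m => (WithLp.toLp 2 (fun i => T (x i)) : Enm n m)) '' L)
      = ⇑T '' centroidBody L :=
  centroidBody_image_linearEquiv_general n m L hL T
end
end

section
/- For a compact set L ⊂ R^{nm} with positive volume, the function θ ↦ ∫_L max_{1≤i≤m} ⟨x_i, θ⟩_- dx̄ on R^n is continuously differentiable away from the origin; consequently, the higher-order centroid body Γ^m L has C^1 support function on R^n \ {0}. -/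
open MeasureTheory Set Pointwise Metric
open scoped RealInnerProductSpace ENNReal NNReal

noncomputable section

/-!
For fixed `x̄` the integrand is the maximum of the `m + 1` functionals `0, -⟪x_i, ·⟫`, which
depend bilinearly on `(x̄, θ)`. For `θ ≠ 0` these functionals take pairwise distinct values at
`θ` unless `x̄` lies on one of finitely many hyperplanes, so for almost every `x̄` a single one
of them is the strict maximum near `θ`: there the integrand is linear in `θ`, and its derivative
is locally constant. The integrand is `C‖x̄‖`-Lipschitz in `θ`, so differentiation under the
integral sign and dominated convergence over the compact `L` give a continuous derivative.
-/

open Filter Topology Function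

section FiniteSup

variable {ι : Type*} [Finite ι]

theorem abs_ciSup_sub_ciSup_le [Nonempty ι] {f g : ι → ℝ} {C : ℝ}
    (h : ∀ i, |f i - g i| ≤ C) :
    |(⨆ i, f i) - ⨆ i, g i| ≤ C := by
  have hle : ∀ f g : ι → ℝ, (∀ i, |f i - g i| ≤ C) → (⨆ i, f i) ≤ (⨆ i, g i) + C :=
    fun f g h => ciSup_le fun i => by
      linarith [(abs_le.1 (h i)).2, le_ciSup (Set.finite_range g).bddAbove i]
  rw [abs_le]
  constructor
  · linarith [hle g f fun i => abs_sub_comm (f i) (g i) ▸ h i]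
  · linarith [hle f g h]

theorem exists_forall_lt_of_injective [Nonempty ι] {α : Type*} [LinearOrder α] {f : ι → α}
    (hf : Injective f) :
    ∃ j₀, ∀ j ≠ j₀, f j < f j₀ := by
  obtain ⟨j₀, hj₀⟩ := Finite.exists_max f
  exact ⟨j₀, fun j hj => (hj₀ j).lt_of_ne (hf.ne hj)⟩

theorem iSup_eventuallyEq_of_forall_lt {X α : Type*} [TopologicalSpace X]
    [ConditionallyCompleteLinearOrder α] [TopologicalSpace α] [OrderClosedTopology α]
    {f : ι → X → α} {x₀ : X} {j₀ : ι} (hf : ∀ j, ContinuousAt (f j) x₀)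
    (hmax : ∀ j ≠ j₀, f j x₀ < f j₀ x₀) :
    (fun x => ⨆ j, f j x) =ᶠ[𝓝 x₀] f j₀ := by
  have hlt : ∀ᶠ x in 𝓝 x₀, ∀ j ≠ j₀, f j x < f j₀ x :=
    eventually_all.2 fun j => by
      by_cases hj : j = j₀
      · exact .of_forall fun _ h => absurd hj h
      · exact ((hf j).eventually_lt (hf j₀) (hmax j hj)).mono fun _ h _ => h
  filter_upwards [hlt] with x hx
  have : Nonempty ι := ⟨j₀⟩
  refine le_antisymm (ciSup_le fun j => ?_)
    (le_ciSup (f := fun j => f j x) (Set.finite_range _).bddAbove j₀)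
  by_cases hj : j = j₀
  · rw [hj]
  · exact (hx j hj).le

theorem iSup_negpt_eq_iSup_option (a : ι → ℝ) :
    ⨆ i, negpt (a i) = ⨆ j : Option ι, j.elim 0 fun i => -a i := by
  have hb : BddAbove (Set.range fun j : Option ι => j.elim 0 fun i => -a i) :=
    (Set.finite_range _).bddAbove
  refine le_antisymm (Real.iSup_le (fun i => max_le (le_ciSup hb none) (le_ciSup hb (some i)))
    (le_ciSup hb none)) (ciSup_le ?_)
  rintro (_ | i)
  · exact Real.iSup_nonneg fun _ => le_max_left _ _
  · exact (le_max_right 0 (-a i)).trans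
      (le_ciSup (f := fun i => negpt (a i)) (Set.finite_range _).bddAbove i)

end FiniteSup

theorem ae_injective_apply {F ι : Type*} [NormedAddCommGroup F] [NormedSpace ℝ F]
    [MeasurableSpace F] [BorelSpace F] [FiniteDimensional ℝ F] (μ : Measure F)
    [μ.IsAddHaarMeasure] [Finite ι] {A : ι → F →L[ℝ] ℝ} (hA : Injective A) :
    ∀ᵐ x ∂μ, Injective fun j => A j x := by
  have hpair : ∀ j k, ∀ᵐ x ∂μ, j ≠ k → A j x ≠ A k x := by
    intro j k
    by_cases hjk : j = k
    · exact .of_forall fun _ h => absurd hjk h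
    have hker : LinearMap.ker (A j - A k).toLinearMap ≠ ⊤ := by
      rw [Ne, LinearMap.ker_eq_top, ← ContinuousLinearMap.toLinearMap_zero,
        ContinuousLinearMap.coe_inj, sub_eq_zero]
      exact hA.ne hjk
    filter_upwards [measure_eq_zero_iff_ae_notMem.1 (Measure.addHaar_submodule μ _ hker)]
      with x hx _
    simpa [sub_eq_zero] using hx
  filter_upwards [ae_all_iff.2 fun j => ae_all_iff.2 (hpair j)] with x hx j k hjk
  by_contra h
  exact hx j k h hjk

section MaxPairing

variable {ι E F : Type*} [Fintype ι] [Nonempty ι]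
  [NormedAddCommGroup E] [NormedSpace ℝ E] [NormedAddCommGroup F] [NormedSpace ℝ F]
  (B : ι → F →L[ℝ] E →L[ℝ] ℝ)

def maxPairing (x : F) (θ : E) : ℝ := ⨆ j, B j x θ

theorem continuous_maxPairing : Continuous fun p : F × E => maxPairing B p.1 p.2 := by
  simp only [maxPairing, ← Finset.sup'_univ_eq_ciSup]
  exact Continuous.finset_sup'_apply _ fun j _ => (B j).continuous₂

theorem lipschitzWith_maxPairing (x : F) :
    LipschitzWith (Real.nnabs ((∑ j, ‖B j‖) * ‖x‖)) (maxPairing B x) := by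
  have hC : 0 ≤ (∑ j, ‖B j‖) * ‖x‖ := by positivity
  refine LipschitzWith.of_dist_le_mul fun θ θ' => ?_
  rw [Real.coe_nnabs, abs_of_nonneg hC, Real.dist_eq, dist_eq_norm]
  refine abs_ciSup_sub_ciSup_le fun j => ?_
  calc |B j x θ - B j x θ'| = ‖B j x (θ - θ')‖ := by rw [map_sub, Real.norm_eq_abs]
    _ ≤ ‖B j‖ * ‖x‖ * ‖θ - θ'‖ := (B j).le_opNorm₂ x (θ - θ')
    _ ≤ (∑ j, ‖B j‖) * ‖x‖ * ‖θ - θ'‖ := by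
        gcongr
        exact Finset.single_le_sum (fun j _ => norm_nonneg (B j)) (Finset.mem_univ j)

theorem exists_maxPairing_eventuallyEq {x : F} {θ₀ : E} (h : Injective fun j => B j x θ₀) :
    ∃ j₀, maxPairing B x =ᶠ[𝓝 θ₀] B j₀ x := by
  obtain ⟨j₀, hj₀⟩ := exists_forall_lt_of_injective h
  exact ⟨j₀, iSup_eventuallyEq_of_forall_lt (fun j => (B j x).continuous.continuousAt) hj₀⟩

theorem hasFDerivAt_maxPairing {x : F} {θ₀ : E} (h : Injective fun j => B j x θ₀) :
    HasFDerivAt (maxPairing B x) (fderiv ℝ (maxPairing B x) θ₀) θ₀ := by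
  obtain ⟨j₀, hj₀⟩ := exists_maxPairing_eventuallyEq B h
  exact ((B j₀ x).hasFDerivAt.congr_of_eventuallyEq hj₀).differentiableAt.hasFDerivAt

theorem continuousAt_fderiv_maxPairing {x : F} {θ₀ : E} (h : Injective fun j => B j x θ₀) :
    ContinuousAt (fderiv ℝ (maxPairing B x)) θ₀ := by
  obtain ⟨j₀, hj₀⟩ := exists_maxPairing_eventuallyEq B h
  refine continuousAt_const.congr (f := fun _ => B j₀ x) ?_
  filter_upwards [hj₀.eventuallyEq_nhds] with θ hθ
  rw [hθ.fderiv_eq, (B j₀ x).fderiv]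

variable [FiniteDimensional ℝ E] [MeasurableSpace E] [BorelSpace E]
  [MeasurableSpace F] [BorelSpace F]

theorem measurable_fderiv_maxPairing (θ : E) :
    Measurable fun x => fderiv ℝ (maxPairing B x) θ :=
  (measurable_fderiv_with_param ℝ (continuous_maxPairing B)).comp
    (measurable_id.prodMk measurable_const)

variable (μ : Measure F) [IsFiniteMeasureOnCompacts μ] {L : Set F}

theorem hasFDerivAt_integral_maxPairing (hL : IsCompact L) {θ₀ : E}
    (h : ∀ᵐ x ∂μ, Injective fun j => B j x θ₀) :
    HasFDerivAt (fun θ => ∫ x in L, maxPairing B x θ ∂μ)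
      (∫ x in L, fderiv ℝ (maxPairing B x) θ₀ ∂μ) θ₀ := by
  have hbound : IntegrableOn (fun x : F => (∑ j, ‖B j‖) * ‖x‖) L μ :=
    (continuous_const.mul continuous_norm).continuousOn.integrableOn_compact hL
  refine (hasFDerivAt_integral_of_dominated_loc_of_lip univ_mem ?_ ?_
    (measurable_fderiv_maxPairing B θ₀).aestronglyMeasurable ?_ hbound ?_).2
  · exact .of_forall fun _ =>
      ((continuous_maxPairing B).comp (continuous_id.prodMk continuous_const)).aestronglyMeasurable
  · exact ((continuous_maxPairing B).comp
      (continuous_id.prodMk continuous_const)).continuousOn.integrableOn_compact hL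
  · exact .of_forall fun x => (lipschitzWith_maxPairing B x).lipschitzOnWith
  · exact ae_restrict_of_ae (h.mono fun x hx => hasFDerivAt_maxPairing B hx)

theorem continuousAt_integral_fderiv_maxPairing (hL : IsCompact L) {θ₀ : E}
    (h : ∀ᵐ x ∂μ, Injective fun j => B j x θ₀) :
    ContinuousAt (fun θ => ∫ x in L, fderiv ℝ (maxPairing B x) θ ∂μ) θ₀ := by
  refine continuousAt_of_dominated (bound := fun x => (∑ j, ‖B j‖) * ‖x‖)
    (.of_forall fun θ => (measurable_fderiv_maxPairing B θ).aestronglyMeasurable) ?_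
    ((continuous_const.mul continuous_norm).continuousOn.integrableOn_compact hL)
    (ae_restrict_of_ae (h.mono fun x hx => continuousAt_fderiv_maxPairing B hx))
  refine .of_forall fun θ => .of_forall fun x => ?_
  have := norm_fderiv_le_of_lipschitz ℝ (x₀ := θ) (lipschitzWith_maxPairing B x)
  rwa [Real.coe_nnabs, abs_of_nonneg (by positivity)] at this

theorem contDiffOn_integral_maxPairing (hL : IsCompact L) {s : Set E} (hs : IsOpen s)
    (h : ∀ θ ∈ s, ∀ᵐ x ∂μ, Injective fun j => B j x θ) :
    ContDiffOn ℝ 1 (fun θ => ∫ x in L, maxPairing B x θ ∂μ) s := fun _ hθ =>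
  (contDiffAt_one_iff.2 ⟨_, s, hs.mem_nhds hθ,
    fun θ hθ => (continuousAt_integral_fderiv_maxPairing B μ hL (h θ hθ)).continuousWithinAt,
    fun θ hθ => hasFDerivAt_integral_maxPairing B μ hL (h θ hθ)⟩).contDiffWithinAt

end MaxPairing

/-- The index `none` accounts for the `0` in `negpt t = max 0 (-t)`. -/
def negInnerPairing (n m : ℕ) : Option (Fin m) → Enm n m →L[ℝ] En n →L[ℝ] ℝ
  | none => 0
  | some i => -(innerSL ℝ).comp (PiLp.proj 2 (fun _ => En n) i)

theorem iSup_negpt_inner_eq_maxPairing {n m : ℕ} (x : Enm n m) (θ : En n) :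
    ⨆ i, negpt ⟪x i, θ⟫ = maxPairing (negInnerPairing n m) x θ := by
  rw [iSup_negpt_eq_iSup_option, maxPairing]
  congr 1 with (_ | i)
  · rfl
  · simp [negInnerPairing]

theorem negInnerPairing_flip_injective {n m : ℕ} {θ : En n} (hθ : θ ≠ 0) :
    Injective fun j => (negInnerPairing n m j).flip θ := by
  have hθθ : ⟪θ, θ⟫ ≠ 0 := inner_self_ne_zero.2 hθ
  have hsingle : ∀ i j, (negInnerPairing n m j).flip θ (WithLp.toLp 2 (Pi.single i θ)) =
      if j = some i then -⟪θ, θ⟫ else 0 := by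
    rintro i (_ | j)
    · simp [negInnerPairing]
    · by_cases hij : j = i
      · subst hij; simp [negInnerPairing]
      · simp [negInnerPairing, hij]
  intro j k hjk
  refine Option.ext fun i => ?_
  have hi := DFunLike.congr_fun hjk (WithLp.toLp 2 (Pi.single i θ))
  simp only [hsingle] at hi
  split_ifs at hi with hj hk hk <;> simp_all

theorem centroidSupport_contDiffOn_general (n m : ℕ)
    (L : Set (Enm n m)) (hL : IsCompact L) :
    ContDiffOn ℝ 1 (fun θ : En n => ∫ x in L, ⨆ i, negpt ⟪(x : Enm n m) i, θ⟫)
        ({(0 : En n)}ᶜ) ∧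
      ContDiffOn ℝ 1 (centroidSupport L) ({(0 : En n)}ᶜ) := by
  have h : ContDiffOn ℝ 1 (fun θ : En n => ∫ x in L, ⨆ i, negpt ⟪(x : Enm n m) i, θ⟫)
      {0}ᶜ := by
    simp only [iSup_negpt_inner_eq_maxPairing]
    exact contDiffOn_integral_maxPairing _ volume hL isOpen_compl_singleton fun θ hθ =>
      ae_injective_apply volume (negInnerPairing_flip_injective hθ)
  exact ⟨h, contDiffOn_const.mul h⟩

/-- `θ ↦ ∫_L max_i ⟨x_i, θ⟩_- dx̄` is `C¹` away from the origin; consequently,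
the support function of `Γ^m L` is `C¹` on `ℝⁿ \ {0}`. -/
theorem centroidSupport_contDiffOn (n m : ℕ) (hn : 0 < n) (hm : 0 < m)
    (L : Set (Enm n m)) (hL : IsCompact L) (hLvol : 0 < volume L) :
    ContDiffOn ℝ 1 (fun θ : En n => ∫ x in L, ⨆ i, negpt ⟪(x : Enm n m) i, θ⟫)
        ({(0 : En n)}ᶜ) ∧
      ContDiffOn ℝ 1 (centroidSupport L) ({(0 : En n)}ᶜ) :=
  centroidSupport_contDiffOn_general n m L hL
end
end

section
/- Let L ⊂ R^{nm} be a compact set with nonempty interior and ξ ∈ S^{n-1}. Then Vol_{nm}(S̄_ξ L) ≥ Vol_{nm}(L), where S̄_ξ is the m-th higher-order Steiner symmetrization. -/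
open MeasureTheory Set Pointwise Metric
open scoped RealInnerProductSpace ENNReal NNReal

noncomputable section

/-- The `m`-th higher-order Steiner symmetral of `L ⊆ R^{nm}` with respect to `ξ`. -/
def steinerM {n m : ℕ} (ξ : En n) (L : Set (Enm n m)) : Set (Enm n m) :=
  {z | ∃ (w : Fin m → En n) (t s : Fin m → ℝ),
    (∀ i, ⟪w i, ξ⟫ = 0) ∧
    (WithLp.toLp 2 (fun i => w i + t i • ξ) ∈ L) ∧
    (WithLp.toLp 2 (fun i => w i + s i • ξ) ∈ L) ∧
    z = fun i => w i + ((t i - s i) / 2) • ξ}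

/-!
Split `(ℝ^n)^m` orthogonally, and measure-preservingly, as `⟨ξ⟩^m × (⟨ξ⟩^m)^⊥`. Over each point
of the second factor, the fibre `A ⊆ ⟨ξ⟩^m ≅ ℝ^m` of `L` produces the fibre `(A - A) / 2` of
`S̄_ξ L`. The Prékopa–Leindler inequality with weight `1/2`, applied to the indicators of `A`, `-A`
and `(A - A) / 2`, gives `vol A ^ 2 = vol A * vol (-A) ≤ vol ((A - A) / 2) ^ 2`, and Fubini
finishes. Prékopa–Leindler holds on `ℝ` by the layer-cake formula and the one-dimensional
Brunn–Minkowski inequality, and passes to `ℝ^k` by Fubini and induction on `k`.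
-/

theorem lintegral_eq_lintegral_meas_ofReal_lt {α : Type*} [MeasurableSpace α] (μ : Measure α)
    [SFinite μ] {f : α → ℝ≥0∞} (hf : Measurable f) :
    ∫⁻ a, f a ∂μ = ∫⁻ t in Ioi (0 : ℝ), μ {a | ENNReal.ofReal t < f a} := by
  set E : Set (α × ℝ) := {p | ENNReal.ofReal p.2 < f p.1}
  have hE : MeasurableSet E := measurableSet_lt (by fun_prop) (hf.comp measurable_fst)
  have hslice : ∀ a, volume.restrict (Ioi (0 : ℝ)) (Prod.mk a ⁻¹' E) = f a := by
    intro a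
    rw [Measure.restrict_apply' measurableSet_Ioi]
    rcases eq_or_ne (f a) ⊤ with h | h
    · simp [E, h]
    · have : Prod.mk a ⁻¹' E ∩ Ioi 0 = Ioo 0 (f a).toReal := by
        ext t
        simp only [E, mem_inter_iff, mem_preimage, mem_ofPred_eq, mem_Ioi, mem_Ioo]
        constructor
        · exact fun ⟨h₁, h₂⟩ => ⟨h₂, (ENNReal.ofReal_lt_iff_lt_toReal h₂.le h).1 h₁⟩
        · exact fun ⟨h₁, h₂⟩ => ⟨(ENNReal.ofReal_lt_iff_lt_toReal h₁.le h).2 h₂, h₁⟩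
      rw [this, Real.volume_Ioo, sub_zero, ENNReal.ofReal_toReal h]
  calc ∫⁻ a, f a ∂μ = ∫⁻ a, volume.restrict (Ioi (0 : ℝ)) (Prod.mk a ⁻¹' E) ∂μ := by
        simp only [hslice]
    _ = μ.prod (volume.restrict (Ioi 0)) E := (Measure.prod_apply hE).symm
    _ = ∫⁻ t in Ioi (0 : ℝ), μ {a | ENNReal.ofReal t < f a} := Measure.prod_apply_symm hE

theorem Real.volume_add_volume_le_volume_add {K K' : Set ℝ} (hK : IsCompact K)
    (hK' : IsCompact K') (hK₀ : K.Nonempty) (hK₀' : K'.Nonempty) :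
    volume K + volume K' ≤ volume (K + K') := by
  set a := sSup K
  set b := sInf K'
  have ha : a ∈ K := hK.sSup_mem hK₀
  have hb : b ∈ K' := hK'.sInf_mem hK₀'
  have hinter : (· + b) '' K ∩ (a + ·) '' K' ⊆ {a + b} := by
    rintro _ ⟨⟨x, hx, rfl⟩, ⟨y, hy, hxy⟩⟩
    have := le_csSup hK.bddAbove hx
    have := csInf_le hK'.bddBelow hy
    simp only [mem_singleton_iff]
    linarith
  calc volume K + volume K' = volume ((· + b) '' K) + volume ((a + ·) '' K') := by
        simp only [image_add_right, image_add_left, measure_preimage_add_right, measure_preimage_add]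
    _ = volume ((· + b) '' K ∪ (a + ·) '' K') := by
        rw [← measure_union_add_inter _ ((hK'.image (continuous_const_add a)).measurableSet),
          measure_mono_null hinter (measure_singleton _), add_zero]
    _ ≤ volume (K + K') := by
        refine measure_mono (union_subset ?_ ?_)
        · rintro _ ⟨x, hx, rfl⟩; exact add_mem_add hx hb
        · rintro _ ⟨y, hy, rfl⟩; exact add_mem_add ha hy

theorem Real.volume_add_volume_le_two_mul_volume {A B S : Set ℝ} (hA : MeasurableSet A)
    (hB : MeasurableSet B) (hA₀ : A.Nonempty) (hB₀ : B.Nonempty)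
    (hS : ∀ a ∈ A, ∀ b ∈ B, midpoint ℝ a b ∈ S) :
    volume A + volume B ≤ 2 * volume S := by
  obtain ⟨a₀, ha₀⟩ := hA₀
  obtain ⟨b₀, hb₀⟩ := hB₀
  rw [hA.measure_eq_iSup_isCompact, hB.measure_eq_iSup_isCompact]
  simp only [iSup_and']
  refine ENNReal.biSup_add_biSup_le' ⟨∅, empty_subset _, isCompact_empty⟩
    ⟨∅, empty_subset _, isCompact_empty⟩ fun K ⟨hKA, hK⟩ K' ⟨hKB, hK'⟩ => ?_
  have hmid : (1 / 2 : ℝ) • (insert a₀ K + insert b₀ K') ⊆ S := by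
    rintro _ ⟨_, ⟨x, hx, y, hy, rfl⟩, rfl⟩
    have := hS x (insert_subset ha₀ hKA hx) y (insert_subset hb₀ hKB hy)
    rwa [midpoint_eq_smul_add, invOf_eq_inv, ← one_div] at this
  calc volume K + volume K' ≤ volume (insert a₀ K) + volume (insert b₀ K') :=
        add_le_add (measure_mono (subset_insert _ _)) (measure_mono (subset_insert _ _))
    _ ≤ volume (insert a₀ K + insert b₀ K') :=
        volume_add_volume_le_volume_add (hK.insert a₀) (hK'.insert b₀) (insert_nonempty _ _)
          (insert_nonempty _ _)
    _ = 2 * volume ((1 / 2 : ℝ) • (insert a₀ K + insert b₀ K')) := by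
        rw [Measure.addHaar_smul, Module.finrank_self, pow_one, ← mul_assoc]
        norm_num [ENNReal.ofReal_div_of_pos, ENNReal.mul_inv_cancel]
    _ ≤ 2 * volume S := by gcongr

theorem measurable_measure_ofReal_lt {α : Type*} [MeasurableSpace α] (μ : Measure α)
    (f : α → ℝ≥0∞) : Measurable fun t : ℝ => μ {a | ENNReal.ofReal t < f a} :=
  Antitone.measurable fun _ _ hst => measure_mono fun _ ha =>
    (ENNReal.ofReal_le_ofReal hst).trans_lt ha

theorem lintegral_add_lintegral_le_two_mul_lintegral {F G H : ℝ → ℝ≥0∞} (hF : Measurable F)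
    (hG : Measurable G) (hH : Measurable H) (hsup : ⨆ a, F a = ⨆ b, G b)
    (h : ∀ a b, min (F a) (G b) ≤ H (midpoint ℝ a b)) :
    (∫⁻ a, F a) + ∫⁻ b, G b ≤ 2 * ∫⁻ x, H x := by
  rw [lintegral_eq_lintegral_meas_ofReal_lt _ hF, lintegral_eq_lintegral_meas_ofReal_lt _ hG,
    lintegral_eq_lintegral_meas_ofReal_lt _ hH,
    ← lintegral_add_left (measurable_measure_ofReal_lt _ F), ← lintegral_const_mul _
      (measurable_measure_ofReal_lt _ H)]
  refine setLIntegral_mono ((measurable_measure_ofReal_lt _ H).const_mul _) fun t _ => ?_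
  by_cases ht : ENNReal.ofReal t < ⨆ a, F a
  · obtain ⟨a₀, ha₀⟩ := lt_iSup_iff.1 ht
    obtain ⟨b₀, hb₀⟩ := lt_iSup_iff.1 (hsup ▸ ht)
    exact Real.volume_add_volume_le_two_mul_volume (measurableSet_lt measurable_const hF)
      (measurableSet_lt measurable_const hG) ⟨a₀, ha₀⟩ ⟨b₀, hb₀⟩
      fun a ha b hb => (lt_min ha hb).trans_le (h a b)
  · have hempty : ∀ {Φ : ℝ → ℝ≥0∞}, ⨆ a, Φ a ≤ ENNReal.ofReal t →
        {a | ENNReal.ofReal t < Φ a} = ∅ := fun hΦ =>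
      eq_empty_of_forall_notMem fun a ha => ((le_iSup _ a).trans hΦ).not_gt ha
    rw [not_lt] at ht
    rw [hempty ht, hempty (hsup ▸ ht)]
    simp

theorem ENNReal.four_mul_le_sq_add (x y : ℝ≥0∞) : 4 * x * y ≤ (x + y) ^ 2 := by
  rcases eq_or_ne x ⊤ with rfl | hx
  · simp
  rcases eq_or_ne y ⊤ with rfl | hy
  · simp
  lift x to ℝ≥0 using hx
  lift y to ℝ≥0 using hy
  exact_mod_cast _root_.four_mul_le_sq_add x y

theorem ENNReal.exists_mul_eq_inv_mul {a b : ℝ≥0∞} (ha0 : a ≠ 0) (hatop : a ≠ ⊤) (hb0 : b ≠ 0)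
    (hbtop : b ≠ ⊤) : ∃ c, c ≠ 0 ∧ c ≠ ⊤ ∧ c * a = c⁻¹ * b := by
  have hq0 : b / a ≠ 0 := ENNReal.div_ne_zero.2 ⟨hb0, hatop⟩
  have hqtop : b / a ≠ ⊤ := ENNReal.div_ne_top hbtop ha0
  set c := (b / a) ^ (1 / 2 : ℝ)
  have hc0 : c ≠ 0 := (ENNReal.rpow_pos (pos_iff_ne_zero.2 hq0) hqtop).ne'
  have hctop : c ≠ ⊤ := ENNReal.rpow_ne_top_of_nonneg (by norm_num) hqtop
  have hcc : c * c = b / a := by rw [← ENNReal.rpow_add _ _ hq0 hqtop]; norm_num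
  refine ⟨c, hc0, hctop, ?_⟩
  rw [← ENNReal.div_mul_cancel ha0 hatop (b := b), ← hcc, mul_assoc, ← mul_assoc c⁻¹,
    ENNReal.inv_mul_cancel hc0 hctop, one_mul]

theorem lintegral_mul_lintegral_le_sq_of_iSup_ne_top {F G H : ℝ → ℝ≥0∞} (hF : Measurable F)
    (hG : Measurable G) (hH : Measurable H) (hFtop : ⨆ a, F a ≠ ⊤) (hGtop : ⨆ b, G b ≠ ⊤)
    (h : ∀ a b, F a * G b ≤ H (midpoint ℝ a b) ^ 2) :
    (∫⁻ a, F a) * (∫⁻ b, G b) ≤ (∫⁻ x, H x) ^ 2 := by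
  set MF := ⨆ a, F a
  set MG := ⨆ b, G b
  rcases eq_or_ne MF 0 with hF0 | hF0
  · simp [show F = 0 from funext fun a => ENNReal.iSup_eq_zero.1 hF0 a]
  rcases eq_or_ne MG 0 with hG0 | hG0
  · simp [show G = 0 from funext fun a => ENNReal.iSup_eq_zero.1 hG0 a]
  obtain ⟨c, hc0, hctop, hc⟩ := ENNReal.exists_mul_eq_inv_mul hF0 hFtop hG0 hGtop
  -- `c • F` and `c⁻¹ • G` have equal suprema and the same products `F a * G b`
  have key := lintegral_add_lintegral_le_two_mul_lintegral (hF.const_mul c) (hG.const_mul c⁻¹) hH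
    (by simp only [← ENNReal.mul_iSup]; exact hc) fun a b => by
      rw [← ENNReal.pow_le_pow_left_iff two_ne_zero]
      calc min (c * F a) (c⁻¹ * G b) ^ 2 ≤ (c * F a) * (c⁻¹ * G b) := by
            rw [sq]; exact mul_le_mul' (min_le_left _ _) (min_le_right _ _)
        _ = F a * G b := by
            rw [mul_mul_mul_comm, ENNReal.mul_inv_cancel hc0 hctop, one_mul]
        _ ≤ _ := h a b
  rw [lintegral_const_mul _ hF, lintegral_const_mul _ hG] at key
  have hamgm := (ENNReal.four_mul_le_sq_add _ _).trans (pow_le_pow_left' key 2)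
  rw [mul_assoc, mul_mul_mul_comm, ENNReal.mul_inv_cancel hc0 hctop, one_mul, mul_pow,
    show (2 : ℝ≥0∞) ^ 2 = 4 by norm_num] at hamgm
  exact (ENNReal.mul_le_mul_iff_right four_ne_zero ENNReal.ofNat_ne_top).1 hamgm

def MidpointPrekopaLeindler (X : Type*) [AddCommGroup X] [Module ℝ X] [MeasureSpace X] : Prop :=
  ∀ f g h : X → ℝ≥0∞, Measurable f → Measurable g → Measurable h →
    (∀ x y, f x * g y ≤ h (midpoint ℝ x y) ^ 2) → (∫⁻ x, f x) * (∫⁻ y, g y) ≤ (∫⁻ z, h z) ^ 2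

namespace MidpointPrekopaLeindler

theorem real : MidpointPrekopaLeindler ℝ := by
  intro F G H hF hG hH h
  -- truncating at height `N` makes the suprema finite
  have htrunc : ∀ {Φ : ℝ → ℝ≥0∞}, Measurable Φ → ∫⁻ a, Φ a = ⨆ N : ℕ, ∫⁻ a, min (Φ a) N :=
    fun hΦ => by
      rw [← lintegral_iSup (fun N => hΦ.min measurable_const)
        fun N N' hN a => min_le_min_left _ (by exact_mod_cast hN)]
      congr 1 with a
      rw [← inf_iSup_eq, ENNReal.iSup_natCast, inf_top_eq]
  rw [htrunc hF, htrunc hG, ENNReal.iSup_mul]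
  refine iSup_le fun N => ?_
  rw [ENNReal.mul_iSup]
  refine iSup_le fun N' => ?_
  have hmono : ∀ {Φ : ℝ → ℝ≥0∞} {N N' : ℕ}, N ≤ N' →
      ∫⁻ a, min (Φ a) N ≤ ∫⁻ a, min (Φ a) N' :=
    fun hN => lintegral_mono fun a => min_le_min_left _ (by exact_mod_cast hN)
  refine (mul_le_mul' (hmono (le_max_left N N')) (hmono (le_max_right N N'))).trans ?_
  refine lintegral_mul_lintegral_le_sq_of_iSup_ne_top (hF.min measurable_const)
    (hG.min measurable_const) hH ?_ ?_ fun a b => ?_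
  · exact ne_top_of_le_ne_top (ENNReal.natCast_ne_top _) (iSup_le fun a => min_le_right _ _)
  · exact ne_top_of_le_ne_top (ENNReal.natCast_ne_top _) (iSup_le fun a => min_le_right _ _)
  · exact (mul_le_mul' (min_le_left _ _) (min_le_left _ _)).trans (h a b)

theorem prod {X Y : Type*} [AddCommGroup X] [Module ℝ X] [MeasureSpace X]
    [AddCommGroup Y] [Module ℝ Y] [MeasureSpace Y]
    [SFinite (volume : Measure Y)] (hX : MidpointPrekopaLeindler X)
    (hY : MidpointPrekopaLeindler Y) : MidpointPrekopaLeindler (X × Y) := by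
  intro f g h hf hg hh hfgh
  have hmid : ∀ (x x' : X) (y y' : Y),
      midpoint ℝ (x, y) (x', y') = (midpoint ℝ x x', midpoint ℝ y y') := by
    simp [midpoint_eq_smul_add]
  rw [Measure.volume_eq_prod, lintegral_prod _ hf.aemeasurable, lintegral_prod _ hg.aemeasurable,
    lintegral_prod _ hh.aemeasurable]
  refine hX _ _ _ hf.lintegral_prod_right' hg.lintegral_prod_right' hh.lintegral_prod_right'
    fun x x' => hY _ _ _ (hf.comp measurable_prodMk_left) (hg.comp measurable_prodMk_left)
      (hh.comp measurable_prodMk_left) fun y y' => ?_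
  simpa only [hmid] using hfgh (x, y) (x', y')

theorem of_measurePreserving {X Y : Type*} [AddCommGroup X] [Module ℝ X] [MeasureSpace X]
    [AddCommGroup Y] [Module ℝ Y] [MeasureSpace Y] (e : X ≃ᵐ Y) (he : MeasurePreserving e)
    (hmid : ∀ x x', e (midpoint ℝ x x') = midpoint ℝ (e x) (e x'))
    (hY : MidpointPrekopaLeindler Y) : MidpointPrekopaLeindler X := by
  intro f g h hf hg hh hfgh
  have hint : ∀ φ : X → ℝ≥0∞, ∫⁻ x, φ x = ∫⁻ y, φ (e.symm y) := fun φ =>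
    ((he.symm e).lintegral_comp_emb e.symm.measurableEmbedding φ).symm
  rw [hint f, hint g, hint h]
  refine hY _ _ _ (hf.comp e.symm.measurable) (hg.comp e.symm.measurable)
    (hh.comp e.symm.measurable) fun y y' => ?_
  have : e.symm (midpoint ℝ y y') = midpoint ℝ (e.symm y) (e.symm y') := by
    rw [e.symm_apply_eq, hmid, e.apply_symm_apply, e.apply_symm_apply]
  simpa only [this] using hfgh (e.symm y) (e.symm y')

theorem pi_fin : ∀ k : ℕ, MidpointPrekopaLeindler (Fin k → ℝ)
  | 0 => fun f g h _ _ _ hfgh => by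
    simpa [Measure.volume_pi_eq_dirac 0, lintegral_dirac, ← mul_pow] using hfgh 0 0
  | k + 1 => of_measurePreserving (MeasurableEquiv.piFinSuccAbove (fun _ => ℝ) 0)
      (volume_preserving_piFinSuccAbove (fun _ => ℝ) 0)
      (fun x x' => by ext <;> simp [midpoint_eq_smul_add, Fin.tail, mul_add]) (real.prod (pi_fin k))

theorem of_finiteDimensional {E : Type*} [NormedAddCommGroup E] [InnerProductSpace ℝ E]
    [FiniteDimensional ℝ E] [MeasurableSpace E] [BorelSpace E] : MidpointPrekopaLeindler E :=
  of_measurePreserving ((stdOrthonormalBasis ℝ E).repr.toMeasurableEquiv.trans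
      (MeasurableEquiv.toLp 2 _).symm)
    ((EuclideanSpace.volume_preserving_symm_measurableEquiv_toLp _).comp
      (stdOrthonormalBasis ℝ E).measurePreserving_repr)
    (fun x x' => by simp [midpoint_eq_smul_add]) (pi_fin _)

theorem volume_le_of_midpoint_neg_mem {X : Type*} [AddCommGroup X] [Module ℝ X] [MeasureSpace X] [MeasurableNeg X]
    [(volume : Measure X).IsNegInvariant] (hX : MidpointPrekopaLeindler X) {A S : Set X}
    (hA : MeasurableSet A) (hS : MeasurableSet S)
    (h : ∀ x ∈ A, ∀ y ∈ A, midpoint ℝ x (-y) ∈ S) : volume A ≤ volume S := by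
  have := hX (A.indicator 1) ((-A).indicator 1) (S.indicator 1) (measurable_one.indicator hA)
    (measurable_one.indicator hA.neg) (measurable_one.indicator hS) fun x y => by
      by_cases hx : x ∈ A
      · by_cases hy : y ∈ -A
        · have hmid := h x hx (-y) hy
          rw [neg_neg] at hmid
          simp [hx, hy, hmid]
        · simp [hy]
      · simp [hx]
  rw [lintegral_indicator_one hA, lintegral_indicator_one hA.neg, lintegral_indicator_one hS,
    Measure.measure_neg, ← sq] at this
  exact (ENNReal.pow_le_pow_left_iff two_ne_zero).1 this

theorem volume_prod_le_of_midpoint_neg_mem {X Y : Type*} [AddCommGroup X] [Module ℝ X] [MeasureSpace X]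
    [MeasurableNeg X] [(volume : Measure X).IsNegInvariant] [SFinite (volume : Measure X)]
    [MeasureSpace Y] [SFinite (volume : Measure Y)] (hX : MidpointPrekopaLeindler X)
    {K S : Set (X × Y)} (hK : MeasurableSet K)
    (h : ∀ x x' y, (x, y) ∈ K → (x', y) ∈ K → (midpoint ℝ x (-x'), y) ∈ S) :
    volume K ≤ volume S := by
  rw [← measure_toMeasurable S, Measure.volume_eq_prod, Measure.prod_apply_symm hK,
    Measure.prod_apply_symm (measurableSet_toMeasurable _ _)]
  exact lintegral_mono fun y => hX.volume_le_of_midpoint_neg_mem (measurable_prodMk_right hK)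
    (measurable_prodMk_right (measurableSet_toMeasurable _ _))
    fun x hx x' hx' => subset_toMeasurable _ _ (h x x' y hx hx')

end MidpointPrekopaLeindler

theorem Submodule.volume_le_of_midpoint_neg_add_mem {V : Type*} [NormedAddCommGroup V]
    [InnerProductSpace ℝ V] [FiniteDimensional ℝ V] [MeasurableSpace V] [BorelSpace V]
    (W : Submodule ℝ V) {L S : Set V} (hL : MeasurableSet L)
    (h : ∀ a ∈ W, ∀ a' ∈ W, ∀ c ∈ Wᗮ, a + c ∈ L → a' + c ∈ L → midpoint ℝ a (-a') + c ∈ S) :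
    volume L ≤ volume S := by
  have he : MeasurePreserving (W.measurableEquivProd (0 : V)).symm := by
    have := (W.measurePreserving_measurableEquivProd (0 : V)).symm
    rwa [InnerProductSpace.euclideanHausdorffMeasure_eq_volume] at this
  rw [← he.measure_preimage_equiv L, ← he.measure_preimage_equiv S]
  refine MidpointPrekopaLeindler.of_finiteDimensional.volume_prod_le_of_midpoint_neg_mem (he.measurable hL)
    fun a a' c ha ha' => ?_
  simp only [mem_preimage, Submodule.measurableEquivProd_symm_apply, vadd_eq_add, add_zero]
    at ha ha' ⊢
  simpa [midpoint_eq_smul_add] using h a a.2 a' a'.2 c c.2 ha ha'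

/-- `⟨ξ⟩^m ⊆ (ℝ^n)^m`. -/
def lineTuples {n : ℕ} (ξ : En n) (m : ℕ) : Submodule ℝ (Enm n m) :=
  LinearMap.range ({
    toFun := fun t => WithLp.toLp 2 fun i => t i • ξ
    map_add' := fun t s => by ext; simp [add_smul]
    map_smul' := fun r t => by ext; simp [mul_smul] } : (Fin m → ℝ) →ₗ[ℝ] Enm n m)

theorem inner_apply_eq_zero_of_mem_orthogonal_lineTuples {n m : ℕ} {ξ : En n} {c : Enm n m}
    (hc : c ∈ (lineTuples ξ m)ᗮ) (i : Fin m) : ⟪c i, ξ⟫ = 0 := by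
  have := Submodule.inner_right_of_mem_orthogonal (LinearMap.mem_range_self _ (Pi.single i 1)) hc
  rw [PiLp.inner_apply, Finset.sum_eq_single i (fun j _ hj => by simp [hj]) (by simp)] at this
  simpa [real_inner_comm] using this

theorem midpoint_neg_add_mem_steinerM {n m : ℕ} {ξ : En n} {L : Set (Enm n m)}
    {a a' c : Enm n m} (ha : a ∈ lineTuples ξ m) (ha' : a' ∈ lineTuples ξ m)
    (hc : c ∈ (lineTuples ξ m)ᗮ) (hL : a + c ∈ L) (hL' : a' + c ∈ L) :
    midpoint ℝ a (-a') + c ∈ steinerM ξ L := by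
  obtain ⟨t, rfl⟩ := ha
  obtain ⟨s, rfl⟩ := ha'
  refine ⟨fun i => c i, t, s, inner_apply_eq_zero_of_mem_orthogonal_lineTuples hc, ?_, ?_, ?_⟩
  · convert hL using 1; ext; simp [add_comm]
  · convert hL' using 1; ext; simp [add_comm]
  · ext i : 1
    simp only [midpoint_eq_smul_add, ← sub_eq_add_neg, ← map_sub]
    simp [add_comm, smul_smul, div_eq_inv_mul]

theorem steinerM_volume_ge_general (n m : ℕ) (L : Set (Enm n m)) (hL₁ : IsCompact L) (ξ : En n) :
    volume L ≤ volume (steinerM ξ L) :=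
  (lineTuples ξ m).volume_le_of_midpoint_neg_add_mem hL₁.measurableSet
    fun _ ha _ ha' _ hc => midpoint_neg_add_mem_steinerM ha ha' hc

/-- higher-order Steiner symmetrization does not decrease volume:
`Vol_{nm}(S̄_ξ L) ≥ Vol_{nm}(L)`. -/
theorem steinerM_volume_ge (n m : ℕ) (hn : 0 < n) (hm : 0 < m)
    (L : Set (Enm n m)) (hL₁ : IsCompact L) (hL₂ : (interior L).Nonempty)
    (ξ : En n) (hξ : ‖ξ‖ = 1) :
    volume L ≤ volume (steinerM ξ L) :=
  steinerM_volume_ge_general n m L hL₁ ξ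
end
end
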